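/- Let Ψ be a matrix with N columns, s, l positive integers, T₀ with |T₀| = s, T₀₁ = T₀ ∪ T₁ with T₁ the l largest entries of h outside T₀. Define A₀(Ψ) = ρ⁻(s+l,Ψ) − 3√(s/l)[ρ⁺(s+2l,Ψ) − ρ⁻(s+2l,Ψ)] and A₁(Ψ) = 4[ρ⁺(s+2l,Ψ) − ρ⁻(s+2l,Ψ)]. If h satisfies the cone condition ‖h_{T₀ᶜ}‖₁ ≤ 3‖h_{T₀}‖₁ + 4‖x*_{T₀ᶜ}‖₁, then ‖Ψh‖₂² ≥ A₀(Ψ)‖h_{T₀₁}‖₂² − A₁(Ψ)‖h_{T₀₁}‖₂‖x*_{T₀ᶜ}‖₁/√l. -/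

import Mathlib

def restrict {N : ℕ} (T : Finset (Fin N)) (h : Fin N → ℝ) : Fin N → ℝ :=
  fun i => if i ∈ T then h i else 0

def l2sq {m : ℕ} (v : Fin m → ℝ) : ℝ := ∑ i, v i ^ 2
noncomputable def l2Norm {m : ℕ} (v : Fin m → ℝ) : ℝ := Real.sqrt (∑ i, v i ^ 2)
def l1Norm {N : ℕ} (v : Fin N → ℝ) : ℝ := ∑ i, |v i|

noncomputable def rhoMinus {m N : ℕ} (k : ℕ) (Ψ : Matrix (Fin m) (Fin N) ℝ) : ℝ :=
  sInf {r | ∃ (T : Finset (Fin N)) (h : Fin N → ℝ), T.card ≤ k ∧ restrict T h ≠ 0 ∧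
    r = l2sq (Ψ.mulVec (restrict T h)) / l2sq (restrict T h)}

noncomputable def rhoPlus {m N : ℕ} (k : ℕ) (Ψ : Matrix (Fin m) (Fin N) ℝ) : ℝ :=
  sSup {r | ∃ (T : Finset (Fin N)) (h : Fin N → ℝ), T.card ≤ k ∧ restrict T h ≠ 0 ∧
    r = l2sq (Ψ.mulVec (restrict T h)) / l2sq (restrict T h)}

noncomputable def A0 {m N : ℕ} (s l : ℕ) (Ψ : Matrix (Fin m) (Fin N) ℝ) : ℝ :=
  rhoMinus (s + l) Ψ - 3 * Real.sqrt ((s : ℝ) / l) * (rhoPlus (s + 2 * l) Ψ - rhoMinus (s + 2 * l) Ψ)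

noncomputable def A1 {m N : ℕ} (s l : ℕ) (Ψ : Matrix (Fin m) (Fin N) ℝ) : ℝ :=
  4 * (rhoPlus (s + 2 * l) Ψ - rhoMinus (s + 2 * l) Ψ)

/-!
Split `h = u + w` with `u = h_{T₀ ∪ T₁}`. The lower restricted isometry bound gives
`‖Ψu‖² ≥ ρ⁻(s+l) ‖u‖²`, so everything rests on the cross term `⟨Ψu, Ψw⟩`. For vectors with
disjoint supports of total size at most `k`, polarization gives
`|⟨Ψu, Ψv⟩| ≤ (ρ⁺(k) - ρ⁻(k))/2 · ‖u‖ ‖v‖`. Cutting `w` into blocks of `l` entries of decreasing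
magnitude, each block has `ℓ²` norm at most `1/√l` times the `ℓ¹` norm of the previous one, so
`|⟨Ψu, Ψw⟩| ≤ (ρ⁺ - ρ⁻)/2 · ‖u‖ · ‖h_{T₀ᶜ}‖₁/√l`. Finally the cone condition and Cauchy–Schwarz
bound `‖h_{T₀ᶜ}‖₁` by `3√s ‖u‖ + 4‖x*_{T₀ᶜ}‖₁`.
-/

open Matrix
open Finset hiding restrict

section Vectors

variable {n : ℕ}

lemma l2sq_eq_dotProduct (v : Fin n → ℝ) : l2sq v = v ⬝ᵥ v := by
  simp only [l2sq, dotProduct, sq]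

lemma l2sq_nonneg (v : Fin n → ℝ) : 0 ≤ l2sq v :=
  sum_nonneg fun _ _ => sq_nonneg _

lemma l2sq_pos {v : Fin n → ℝ} (hv : v ≠ 0) : 0 < l2sq v :=
  (l2sq_nonneg v).lt_of_ne' (by rwa [l2sq_eq_dotProduct, Ne, dotProduct_self_eq_zero])

lemma l2sq_add (a b : Fin n → ℝ) : l2sq (a + b) = l2sq a + 2 * (a ⬝ᵥ b) + l2sq b := by
  simp only [l2sq_eq_dotProduct, add_dotProduct, dotProduct_add, dotProduct_comm b a]
  ring

lemma l2sq_sub (a b : Fin n → ℝ) : l2sq (a - b) = l2sq a - 2 * (a ⬝ᵥ b) + l2sq b := by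
  simp only [l2sq_eq_dotProduct, sub_dotProduct, dotProduct_sub, dotProduct_comm b a]
  ring

lemma l2sq_smul (c : ℝ) (v : Fin n → ℝ) : l2sq (c • v) = c ^ 2 * l2sq v := by
  simp only [l2sq_eq_dotProduct, smul_dotProduct, dotProduct_smul, smul_eq_mul]
  ring

lemma dotProduct_eq_zero_of_disjoint {A B : Finset (Fin n)} {u v : Fin n → ℝ}
    (hu : ∀ i ∉ A, u i = 0) (hv : ∀ i ∉ B, v i = 0) (hAB : Disjoint A B) : u ⬝ᵥ v = 0 :=
  sum_eq_zero fun i _ => by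
    by_cases hi : i ∈ A
    · rw [hv i (disjoint_left.mp hAB hi), mul_zero]
    · rw [hu i hi, zero_mul]

lemma l2sq_mulVec_le {m : ℕ} (Ψ : Matrix (Fin m) (Fin n) ℝ) (v : Fin n → ℝ) :
    l2sq (Ψ *ᵥ v) ≤ (∑ i, ∑ j, Ψ i j ^ 2) * l2sq v := by
  rw [l2sq, sum_mul]
  exact sum_le_sum fun i _ => sum_mul_sq_le_sq_mul_sq univ (Ψ i) v

end Vectors

section Restrict

variable {N : ℕ}

lemma restrict_apply_of_notMem {T : Finset (Fin N)} {i : Fin N} (hi : i ∉ T) (h : Fin N → ℝ) :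
    restrict T h i = 0 :=
  if_neg hi

lemma restrict_eq_self {T : Finset (Fin N)} {v : Fin N → ℝ} (hv : ∀ i ∉ T, v i = 0) :
    restrict T v = v :=
  funext fun i => by
    by_cases hi : i ∈ T
    · exact if_pos hi
    · rw [restrict_apply_of_notMem hi, hv i hi]

lemma restrict_add_restrict_sdiff {B S : Finset (Fin N)} (hBS : B ⊆ S) (h : Fin N → ℝ) :
    restrict B h + restrict (S \ B) h = restrict S h := by
  funext i
  by_cases hiB : i ∈ B
  · simp [restrict, hiB, hBS hiB]
  · by_cases hiS : i ∈ S <;> simp [restrict, hiB, hiS]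

lemma restrict_add_restrict_compl (T : Finset (Fin N)) (h : Fin N → ℝ) :
    restrict T h + restrict Tᶜ h = h := by
  funext i
  by_cases hi : i ∈ T <;> simp [restrict, hi]

lemma l2sq_restrict (T : Finset (Fin N)) (h : Fin N → ℝ) :
    l2sq (restrict T h) = ∑ i ∈ T, h i ^ 2 := by
  simp [l2sq, restrict, apply_ite (· ^ 2), sum_ite_mem]

lemma l1Norm_restrict (T : Finset (Fin N)) (h : Fin N → ℝ) :
    l1Norm (restrict T h) = ∑ i ∈ T, |h i| := by
  simp [l1Norm, restrict, apply_ite abs, sum_ite_mem]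

end Restrict

section Rayleigh

variable {m N : ℕ} (Ψ : Matrix (Fin m) (Fin N) ℝ)

def rayleighQuotients (k : ℕ) : Set ℝ :=
  {r | ∃ (T : Finset (Fin N)) (h : Fin N → ℝ), T.card ≤ k ∧ restrict T h ≠ 0 ∧
    r = l2sq (Ψ.mulVec (restrict T h)) / l2sq (restrict T h)}

lemma rhoMinus_eq_sInf (k : ℕ) : rhoMinus k Ψ = sInf (rayleighQuotients Ψ k) := rfl

lemma rhoPlus_eq_sSup (k : ℕ) : rhoPlus k Ψ = sSup (rayleighQuotients Ψ k) := rfl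

lemma bddBelow_rayleighQuotients (k : ℕ) : BddBelow (rayleighQuotients Ψ k) :=
  ⟨0, by
    rintro _ ⟨T, h, -, -, rfl⟩
    exact div_nonneg (l2sq_nonneg _) (l2sq_nonneg _)⟩

lemma bddAbove_rayleighQuotients (k : ℕ) : BddAbove (rayleighQuotients Ψ k) :=
  ⟨∑ i, ∑ j, Ψ i j ^ 2, by
    rintro _ ⟨T, h, -, hne, rfl⟩
    exact (div_le_iff₀ (l2sq_pos hne)).2 (l2sq_mulVec_le Ψ _)⟩

-- When no admissible quotient exists, both sides are the junk value `0`.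
lemma rhoMinus_le_rhoPlus (k : ℕ) : rhoMinus k Ψ ≤ rhoPlus k Ψ := by
  rw [rhoMinus_eq_sInf, rhoPlus_eq_sSup]
  rcases (rayleighQuotients Ψ k).eq_empty_or_nonempty with hempty | hne
  · rw [hempty, Real.sInf_empty, Real.sSup_empty]
  · exact csInf_le_csSup hne (bddBelow_rayleighQuotients Ψ k) (bddAbove_rayleighQuotients Ψ k)

lemma rhoPlus_sub_rhoMinus_nonneg (k : ℕ) : 0 ≤ rhoPlus k Ψ - rhoMinus k Ψ :=
  sub_nonneg.2 (rhoMinus_le_rhoPlus Ψ k)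

variable {k : ℕ} {T : Finset (Fin N)} {v : Fin N → ℝ}

lemma div_mem_rayleighQuotients (hT : T.card ≤ k) (hv : ∀ i ∉ T, v i = 0) (hv0 : v ≠ 0) :
    l2sq (Ψ *ᵥ v) / l2sq v ∈ rayleighQuotients Ψ k :=
  ⟨T, v, hT, by rwa [restrict_eq_self hv], by rw [restrict_eq_self hv]⟩

lemma rhoMinus_mul_le (hT : T.card ≤ k) (hv : ∀ i ∉ T, v i = 0) :
    rhoMinus k Ψ * l2sq v ≤ l2sq (Ψ *ᵥ v) := by
  rcases eq_or_ne v 0 with rfl | hv0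
  · simp [l2sq]
  · rw [← le_div_iff₀ (l2sq_pos hv0)]
    exact csInf_le (bddBelow_rayleighQuotients Ψ k) (div_mem_rayleighQuotients Ψ hT hv hv0)

lemma le_rhoPlus_mul (hT : T.card ≤ k) (hv : ∀ i ∉ T, v i = 0) :
    l2sq (Ψ *ᵥ v) ≤ rhoPlus k Ψ * l2sq v := by
  rcases eq_or_ne v 0 with rfl | hv0
  · simp [l2sq]
  · rw [← div_le_iff₀ (l2sq_pos hv0)]
    exact le_csSup (bddAbove_rayleighQuotients Ψ k) (div_mem_rayleighQuotients Ψ hT hv hv0)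

end Rayleigh

section Blocks

variable {ι : Type*}

lemma Finset.exists_subset_card_eq_forall_sdiff_le {β : Type*} [LinearOrder β] [DecidableEq ι]
    (f : ι → β) (l : ℕ) (S : Finset ι) (hl : l ≤ S.card) :
    ∃ B ⊆ S, B.card = l ∧ ∀ i ∈ S \ B, ∀ j ∈ B, f i ≤ f j := by
  induction l generalizing S with
  | zero => exact ⟨∅, empty_subset S, card_empty, by simp⟩
  | succ l ih =>
    obtain ⟨a, haS, ha⟩ := S.exists_max_image f (card_pos.1 (by omega))
    obtain ⟨B, hBS, hB, htop⟩ := ih (S.erase a) (by rw [card_erase_of_mem haS]; omega)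
    have haB : a ∉ B := fun h => notMem_erase a S (hBS h)
    refine ⟨insert a B, insert_subset haS (hBS.trans (erase_subset a S)),
      by rw [card_insert_of_notMem haB, hB], ?_⟩
    intro i hi j hj
    rw [mem_sdiff, mem_insert, not_or] at hi
    rcases mem_insert.1 hj with rfl | hj
    · exact ha i hi.1
    · exact htop i (mem_sdiff.2 ⟨mem_erase.2 ⟨hi.2.1, hi.1⟩, hi.2.2⟩) j hj

lemma sqrt_sum_sq_le_sum_abs_div_sqrt {h : ι → ℝ} {S B : Finset ι} {l : ℕ}
    (hS : S.card ≤ l) (hB : B.card = l) (hdom : ∀ i ∈ S, ∀ j ∈ B, |h i| ≤ |h j|) :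
    √(∑ i ∈ S, h i ^ 2) ≤ (∑ j ∈ B, |h j|) / √l := by
  rcases Nat.eq_zero_or_pos l with rfl | hl
  · simp [card_eq_zero.1 (Nat.le_zero.1 hS)]
  set M := ∑ j ∈ B, |h j|
  have hl' : (0 : ℝ) < l := Nat.cast_pos.2 hl
  have havg : ∀ i ∈ S, l * |h i| ≤ M := fun i hi => by
    simpa [hB] using card_nsmul_le_sum B (fun j => |h j|) (|h i|) (hdom i hi)
  have hsq : (l : ℝ) ^ 2 * ∑ i ∈ S, h i ^ 2 ≤ l * M ^ 2 :=
    calc (l : ℝ) ^ 2 * ∑ i ∈ S, h i ^ 2 = ∑ i ∈ S, (l * |h i|) ^ 2 := by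
          rw [mul_sum]; simp only [mul_pow, sq_abs]
      _ ≤ ∑ _i ∈ S, M ^ 2 :=
          sum_le_sum fun i hi => pow_le_pow_left₀ (by positivity) (havg i hi) 2
      _ = S.card * M ^ 2 := by rw [sum_const, nsmul_eq_mul]
      _ ≤ l * M ^ 2 := by gcongr
  rw [le_div_iff₀ (Real.sqrt_pos.2 hl'), ← Real.sqrt_mul (sum_nonneg fun _ _ => sq_nonneg _),
    Real.sqrt_le_left (sum_nonneg fun _ _ => abs_nonneg _)]
  nlinarith

lemma sum_abs_le_sqrt_card_mul_sqrt_sum_sq (h : ι → ℝ) (T : Finset ι) :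
    ∑ i ∈ T, |h i| ≤ √T.card * √(∑ i ∈ T, h i ^ 2) := by
  rw [← Real.sqrt_mul (Nat.cast_nonneg _)]
  refine Real.le_sqrt_of_sq_le ?_
  simpa only [sq_abs] using sq_sum_le_card_mul_sum_sq (s := T) (f := fun i => |h i|)

end Blocks

section CrossTerm

variable {m N : ℕ} (Ψ : Matrix (Fin m) (Fin N) ℝ) {k : ℕ} {A B : Finset (Fin N)}
  {u v : Fin N → ℝ}

lemma dotProduct_mulVec_le_of_disjoint (hu : ∀ i ∉ A, u i = 0) (hv : ∀ i ∉ B, v i = 0)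
    (hAB : Disjoint A B) (hk : A.card + B.card ≤ k) :
    4 * (Ψ *ᵥ u ⬝ᵥ Ψ *ᵥ v) ≤ (rhoPlus k Ψ - rhoMinus k Ψ) * (l2sq u + l2sq v) := by
  have hAB_card : (A ∪ B).card ≤ k := (card_union_le A B).trans hk
  have huv : u ⬝ᵥ v = 0 := dotProduct_eq_zero_of_disjoint hu hv hAB
  have hsupp : ∀ w : Fin N → ℝ, (∀ i ∉ A ∪ B, w i = u i + v i ∨ w i = u i - v i) →
      ∀ i ∉ A ∪ B, w i = 0 := by
    intro w hw i hi
    rw [mem_union, not_or] at hi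
    rcases hw i (by simp [hi]) with h | h <;> simp [h, hu i hi.1, hv i hi.2]
  have hplus := le_rhoPlus_mul Ψ hAB_card (hsupp (u + v) fun i _ => Or.inl rfl)
  have hminus := rhoMinus_mul_le Ψ hAB_card (hsupp (u - v) fun i _ => Or.inr rfl)
  rw [mulVec_add, l2sq_add, l2sq_add, huv] at hplus
  rw [mulVec_sub, l2sq_sub, l2sq_sub, huv] at hminus
  linarith

lemma abs_dotProduct_mulVec_le_of_disjoint (hu : ∀ i ∉ A, u i = 0) (hv : ∀ i ∉ B, v i = 0)
    (hAB : Disjoint A B) (hk : A.card + B.card ≤ k) :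
    |Ψ *ᵥ u ⬝ᵥ Ψ *ᵥ v| ≤
      (rhoPlus k Ψ - rhoMinus k Ψ) / 2 * √(l2sq u) * √(l2sq v) := by
  rcases eq_or_ne u 0 with rfl | hu0
  · simp [l2sq]
  rcases eq_or_ne v 0 with rfl | hv0
  · simp [l2sq]
  set a := √(l2sq u)
  set b := √(l2sq v)
  have hab : 0 < a * b := mul_pos (Real.sqrt_pos.2 (l2sq_pos hu0)) (Real.sqrt_pos.2 (l2sq_pos hv0))
  have ha2 : l2sq u = a ^ 2 := (Real.sq_sqrt (l2sq_nonneg u)).symm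
  have hb2 : l2sq v = b ^ 2 := (Real.sq_sqrt (l2sq_nonneg v)).symm
  -- `b • u` and `±a • v` have the same norm `a * b`, which turns the sum of squares into a product.
  have hscaled : ∀ c : ℝ, c ^ 2 = a ^ 2 →
      4 * (b * c) * (Ψ *ᵥ u ⬝ᵥ Ψ *ᵥ v) ≤
        (rhoPlus k Ψ - rhoMinus k Ψ) * (2 * (a * b) ^ 2) := by
    intro c hc
    have := dotProduct_mulVec_le_of_disjoint Ψ (u := b • u) (v := c • v)
      (fun i hi => by simp [hu i hi]) (fun i hi => by simp [hv i hi]) hAB hk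
    rw [mulVec_smul, mulVec_smul, smul_dotProduct, dotProduct_smul, l2sq_smul, l2sq_smul,
      ha2, hb2, hc, smul_eq_mul, smul_eq_mul] at this
    linarith
  have hupper := hscaled a rfl
  have hlower := hscaled (-a) (neg_sq a)
  rw [abs_le]
  constructor <;> nlinarith

lemma abs_dotProduct_mulVec_restrict_le {l : ℕ} (hl : 0 < l) (hu : ∀ i ∉ A, u i = 0)
    (hk : A.card + l ≤ k) (h : Fin N → ℝ) (S B : Finset (Fin N)) (hAS : Disjoint A S)
    (hB : B.card = l) (hdom : ∀ i ∈ S, ∀ j ∈ B, |h i| ≤ |h j|) :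
    |Ψ *ᵥ u ⬝ᵥ Ψ *ᵥ restrict S h| ≤
      (rhoPlus k Ψ - rhoMinus k Ψ) / 2 * √(l2sq u) *
        ((∑ j ∈ B, |h j|) + ∑ i ∈ S, |h i|) / √l := by
  set C := (rhoPlus k Ψ - rhoMinus k Ψ) / 2 * √(l2sq u)
  have hC : 0 ≤ C :=
    mul_nonneg (div_nonneg (rhoPlus_sub_rhoMinus_nonneg Ψ k) zero_le_two) (Real.sqrt_nonneg _)
  induction S using Finset.strongInduction generalizing B with
  | H S ih =>
  have hblock : ∀ S' ⊆ S, S'.card ≤ l → ∀ B' : Finset (Fin N), B'.card = l →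
      (∀ i ∈ S', ∀ j ∈ B', |h i| ≤ |h j|) →
      |Ψ *ᵥ u ⬝ᵥ Ψ *ᵥ restrict S' h| ≤ C * (∑ j ∈ B', |h j|) / √l := by
    intro S' hS' hS'l B' hB' hdom'
    calc |Ψ *ᵥ u ⬝ᵥ Ψ *ᵥ restrict S' h| ≤ C * √(l2sq (restrict S' h)) :=
          abs_dotProduct_mulVec_le_of_disjoint Ψ hu (fun i hi => restrict_apply_of_notMem hi h)
            (hAS.mono_right hS') (by omega)
      _ ≤ C * ((∑ j ∈ B', |h j|) / √l) := by
          rw [l2sq_restrict]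
          exact mul_le_mul_of_nonneg_left (sqrt_sum_sq_le_sum_abs_div_sqrt hS'l hB' hdom') hC
      _ = C * (∑ j ∈ B', |h j|) / √l := (mul_div_assoc _ _ _).symm
  by_cases hSl : S.card ≤ l
  · refine (hblock S subset_rfl hSl B hB hdom).trans ?_
    gcongr
    exact le_add_of_nonneg_right (sum_nonneg fun _ _ => abs_nonneg _)
  obtain ⟨B', hB'S, hB', htop⟩ :=
    exists_subset_card_eq_forall_sdiff_le (fun i => |h i|) l S (by omega)
  have hrest := ih (S \ B') (sdiff_ssubset hB'S (card_pos.1 (by omega))) B'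
    (hAS.mono_right sdiff_subset) hB' htop
  rw [← restrict_add_restrict_sdiff hB'S, mulVec_add, dotProduct_add]
  calc _ ≤ |Ψ *ᵥ u ⬝ᵥ Ψ *ᵥ restrict B' h| + |Ψ *ᵥ u ⬝ᵥ Ψ *ᵥ restrict (S \ B') h| :=
        abs_add_le _ _
    _ ≤ C * (∑ j ∈ B, |h j|) / √l +
          C * ((∑ j ∈ B', |h j|) + ∑ i ∈ S \ B', |h i|) / √l :=
        add_le_add (hblock B' hB'S hB'.le B hB fun i hi => hdom i (hB'S hi)) hrest
    _ = C * ((∑ j ∈ B, |h j|) + ∑ i ∈ S, |h i|) / √l := by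
        rw [← sum_sdiff hB'S]
        ring

end CrossTerm

lemma sum_abs_compl_le_of_cone {N s : ℕ} {h : Fin N → ℝ} {T₀ T : Finset (Fin N)} {X : ℝ}
    (hT₀ : T₀.card = s) (hT : T₀ ⊆ T)
    (hcone : l1Norm (restrict T₀ᶜ h) ≤ 3 * l1Norm (restrict T₀ h) + 4 * X) :
    ∑ i ∈ T₀ᶜ, |h i| ≤ 3 * (√s * l2Norm (restrict T h)) + 4 * X := by
  have hT₀T : ∑ i ∈ T₀, h i ^ 2 ≤ l2sq (restrict T h) := by
    rw [l2sq_restrict]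
    exact sum_le_sum_of_subset_of_nonneg hT fun _ _ _ => sq_nonneg _
  have hCS : ∑ i ∈ T₀, |h i| ≤ √s * l2Norm (restrict T h) := by
    refine (sum_abs_le_sqrt_card_mul_sqrt_sum_sq h T₀).trans ?_
    rw [hT₀]
    gcongr
    exact Real.sqrt_le_sqrt hT₀T
  rw [l1Norm_restrict, l1Norm_restrict] at hcone
  linarith

theorem stmt8_general {m N : ℕ} (Ψ : Matrix (Fin m) (Fin N) ℝ) (s l : ℕ) (hl : 1 ≤ l)
    (h xstar : Fin N → ℝ) (T₀ T₁ : Finset (Fin N))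
    (hT₀ : T₀.card = s) (hT₁sub : T₁ ⊆ T₀ᶜ) (hT₁card : T₁.card = l)
    (hlargest : ∀ i ∈ T₀ᶜ \ T₁, ∀ i' ∈ T₁, |h i| ≤ |h i'|)
    (hcone : l1Norm (restrict T₀ᶜ h) ≤ 3 * l1Norm (restrict T₀ h) + 4 * l1Norm (restrict T₀ᶜ xstar)) :
    A0 s l Ψ * l2sq (restrict (T₀ ∪ T₁) h) -
      A1 s l Ψ * l2Norm (restrict (T₀ ∪ T₁) h) * l1Norm (restrict T₀ᶜ xstar) / Real.sqrt l ≤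
    l2sq (Ψ.mulVec h) := by
  set u := restrict (T₀ ∪ T₁) h
  set U := l2Norm u
  set X := l1Norm (restrict T₀ᶜ xstar)
  set D := rhoPlus (s + 2 * l) Ψ - rhoMinus (s + 2 * l) Ψ
  set S := T₀ᶜ \ T₁
  have hu : ∀ i ∉ T₀ ∪ T₁, u i = 0 := fun i hi => restrict_apply_of_notMem hi h
  have hT₀₁ : (T₀ ∪ T₁).card ≤ s + l := (card_union_le _ _).trans (by omega)
  have hS : (T₀ ∪ T₁)ᶜ = S := by ext; simp [S]
  have hU : l2sq u = U ^ 2 := (Real.sq_sqrt (l2sq_nonneg u)).symm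
  have hexpand : l2sq (Ψ *ᵥ h) =
      l2sq (Ψ *ᵥ u) + 2 * (Ψ *ᵥ u ⬝ᵥ Ψ *ᵥ restrict S h) + l2sq (Ψ *ᵥ restrict S h) := by
    rw [← l2sq_add, ← mulVec_add, ← hS, restrict_add_restrict_compl]
  have hhead : rhoMinus (s + l) Ψ * U ^ 2 ≤ l2sq (Ψ *ᵥ u) :=
    hU ▸ rhoMinus_mul_le Ψ hT₀₁ hu
  have hcross : |Ψ *ᵥ u ⬝ᵥ Ψ *ᵥ restrict S h| ≤
      D / 2 * U * (∑ i ∈ T₀ᶜ, |h i|) / √l := by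
    have := abs_dotProduct_mulVec_restrict_le Ψ (k := s + 2 * l) hl hu (by omega) h S T₁
      (hS ▸ disjoint_compl_right) hT₁card hlargest
    rwa [add_comm (∑ j ∈ T₁, |h j|), sum_sdiff hT₁sub] at this
  have htail : ∑ i ∈ T₀ᶜ, |h i| ≤ 3 * (√s * U) + 4 * X :=
    sum_abs_compl_le_of_cone hT₀ subset_union_left hcone
  have hDU : 0 ≤ D / 2 * U :=
    mul_nonneg (div_nonneg (rhoPlus_sub_rhoMinus_nonneg Ψ _) zero_le_two) (Real.sqrt_nonneg _)
  have hcross' : 2 * |Ψ *ᵥ u ⬝ᵥ Ψ *ᵥ restrict S h| ≤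
      3 * (√s / √l) * D * U ^ 2 + 4 * D * U * X / √l :=
    calc _ ≤ 2 * (D / 2 * U * (∑ i ∈ T₀ᶜ, |h i|) / √l) := by gcongr
      _ ≤ 2 * (D / 2 * U * (3 * (√s * U) + 4 * X) / √l) := by gcongr
      _ = _ := by ring
  rw [A0, A1, Real.sqrt_div (Nat.cast_nonneg _), hU]
  linarith [neg_abs_le (Ψ *ᵥ u ⬝ᵥ Ψ *ᵥ restrict S h), l2sq_nonneg (Ψ *ᵥ restrict S h)]

theorem stmt8 {m N : ℕ} (Ψ : Matrix (Fin m) (Fin N) ℝ) (s l : ℕ) (hs : 1 ≤ s) (hl : 1 ≤ l)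
    (h xstar : Fin N → ℝ) (T₀ T₁ : Finset (Fin N))
    (hT₀ : T₀.card = s) (hT₁sub : T₁ ⊆ T₀ᶜ) (hT₁card : T₁.card = l)
    (hlargest : ∀ i ∈ T₀ᶜ \ T₁, ∀ i' ∈ T₁, |h i| ≤ |h i'|)
    (hcone : l1Norm (restrict T₀ᶜ h) ≤ 3 * l1Norm (restrict T₀ h) + 4 * l1Norm (restrict T₀ᶜ xstar)) :
    A0 s l Ψ * l2sq (restrict (T₀ ∪ T₁) h) -
      A1 s l Ψ * l2Norm (restrict (T₀ ∪ T₁) h) * l1Norm (restrict T₀ᶜ xstar) / Real.sqrt l ≤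
    l2sq (Ψ.mulVec h) :=
  stmt8_general Ψ s l hl h xstar T₀ T₁ hT₀ hT₁sub hT₁card hlargest hcone
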